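/- Let X be a real normed space of dimension at least 2 and let (G,+) be an Abelian group. A mapping f : X → G satisfies: for all x,y ∈ X, x ⊥_{ρ*} y implies f(x+y) = f(x) + f(y), if and only if there exist an additive mapping A : X → G and a biadditive symmetric mapping B : X × X → G such that f(x) = A(x) + B(x,x) for all x ∈ X and B(x,y) = 0 whenever x ⊥_{ρ*} y. -/

import Mathlib

/-!
Write `Δ(x, y) = f (x + y) - f x - f y`. If `y - r • x` is `ρ*`-orthogonal to `x`, which happens
for `r = ρ₊(x, y) / ‖x‖²` and for `r = ρ₋(x, y) / ‖x‖²`, then `Δ(x, y) = Δ(x, r • x)`. At a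
non-smooth point `x` the pair `(ρ₋(x, u), ρ₊(x, u))` can be made equal to any `(a, b)` with
`a < b`, so `r ↦ Δ(x, r • x)` is constant, and `Δ(x, ·) = 0`. At a smooth point `ρ₊(x, ·)` is
linear, so it remains to see that `r ↦ Δ(x, r • x)` is additive. Here the second dimension enters:
pick `w` with `ρ₊(x, w) = 0` and `‖w‖ > 2‖x‖`. Then `f` is additive across the lines `ℝx`, `ℝw`, so
`Δ(x + w, a • x + b • w) = Δ(x, a • x) + Δ(w, b • w)`, while for smooth `x + w` the left side is a
function of `a ρ₊(x + w, x) + b ρ₊(x + w, w)` with `ρ₊(x + w, w) > 0`: a Pexider equation.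
So `Δ` is symmetric and biadditive, and `B(x, y) = Δ(x / 2, y)`, `A(x) = f x - B(x, x)` work.
-/

open Filter Topology

/-- The norm derivative `ρ₊(x,y) = lim_{t→0⁺} (‖x+ty‖² − ‖x‖²)/(2t)`. -/
noncomputable def rhoPlus {X : Type*} [NormedAddCommGroup X] [NormedSpace ℝ X] (x y : X) : ℝ :=
  limUnder (𝓝[>] (0 : ℝ)) (fun t : ℝ => (‖x + t • y‖ ^ 2 - ‖x‖ ^ 2) / (2 * t))

/-- The norm derivative `ρ₋(x,y) = lim_{t→0⁻} (‖x+ty‖² − ‖x‖²)/(2t)`. -/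
noncomputable def rhoMinus {X : Type*} [NormedAddCommGroup X] [NormedSpace ℝ X] (x y : X) : ℝ :=
  limUnder (𝓝[<] (0 : ℝ)) (fun t : ℝ => (‖x + t • y‖ ^ 2 - ‖x‖ ^ 2) / (2 * t))

/-- `ρ*(x,y) := ρ₋(x,y)·ρ₊(x,y)`. -/
noncomputable def rhoStar {X : Type*} [NormedAddCommGroup X] [NormedSpace ℝ X] (x y : X) : ℝ :=
  rhoMinus x y * rhoPlus x y

open Set

section NormDerivative

variable {X : Type*} [NormedAddCommGroup X] [NormedSpace ℝ X]

lemma convexOn_norm_add_smul_sq (x y : X) : ConvexOn ℝ univ (fun t : ℝ => ‖x + t • y‖ ^ 2) := by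
  have h : ConvexOn ℝ univ (fun t : ℝ => ‖x + t • y‖) := by
    have e : (fun t : ℝ => ‖x + t • y‖) = norm ∘ AffineMap.lineMap x (x + y) := by
      funext t
      simp [AffineMap.lineMap_apply, add_comm]
    rw [e]
    simpa using convexOn_univ_norm.comp_affineMap (AffineMap.lineMap x (x + y))
  exact h.pow (fun _ _ => norm_nonneg _) 2

lemma hasDerivWithinAt_rhoPlus (x y : X) :
    HasDerivWithinAt (fun t : ℝ => ‖x + t • y‖ ^ 2) (2 * rhoPlus x y) (Ioi 0) 0 := by
  have hd := (convexOn_norm_add_smul_sq x y).hasDerivWithinAt_rightDeriv_of_mem_interior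
    (x := 0) (by simp)
  have hq := ((hasDerivWithinAt_iff_tendsto_slope' self_notMem_Ioi).1 hd).div_const 2
  rw [rhoPlus, (hq.congr fun t => by simp [slope_def_field, div_div, mul_comm]).limUnder_eq,
    mul_div_cancel₀ _ two_ne_zero]
  exact hd

lemma hasDerivWithinAt_rhoMinus (x y : X) :
    HasDerivWithinAt (fun t : ℝ => ‖x + t • y‖ ^ 2) (2 * rhoMinus x y) (Iio 0) 0 := by
  have hd := (convexOn_norm_add_smul_sq x y).hasDerivWithinAt_leftDeriv_of_mem_interior
    (x := 0) (by simp)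
  have hq := ((hasDerivWithinAt_iff_tendsto_slope' self_notMem_Iio).1 hd).div_const 2
  rw [rhoMinus, (hq.congr fun t => by simp [slope_def_field, div_div, mul_comm]).limUnder_eq,
    mul_div_cancel₀ _ two_ne_zero]
  exact hd

lemma rhoPlus_eq_of_hasDerivWithinAt {x y : X} {g : ℝ → ℝ} {L : ℝ}
    (hg : ∀ t, g t = ‖x + t • y‖ ^ 2) (h : HasDerivWithinAt g (2 * L) (Ioi 0) 0) :
    rhoPlus x y = L := by
  rw [funext hg] at h
  linarith [(uniqueDiffWithinAt_Ioi 0).eq_deriv _ (hasDerivWithinAt_rhoPlus x y) h]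

lemma rhoMinus_le_rhoPlus (x y : X) : rhoMinus x y ≤ rhoPlus x y := by
  have h := (convexOn_norm_add_smul_sq x y).leftDeriv_le_rightDeriv_of_mem_interior
    (x := 0) (by simp)
  rw [(hasDerivWithinAt_rhoMinus x y).derivWithin (uniqueDiffWithinAt_Iio 0),
    (hasDerivWithinAt_rhoPlus x y).derivWithin (uniqueDiffWithinAt_Ioi 0)] at h
  linarith

lemma le_rhoMinus (x y : X) : (‖x‖ ^ 2 - ‖x - y‖ ^ 2) / 2 ≤ rhoMinus x y := by
  have h := (convexOn_norm_add_smul_sq x y).slope_le_of_hasDerivWithinAt_Iio (mem_univ (-1))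
    (mem_univ 0) (by norm_num) (hasDerivWithinAt_rhoMinus x y)
  simp only [slope_def_field, zero_smul, add_zero, neg_one_smul, ← sub_eq_add_neg] at h
  linarith

lemma rhoMinus_eq_neg_rhoPlus_neg (x y : X) : rhoMinus x y = -rhoPlus x (-y) := by
  have h := (hasDerivWithinAt_rhoMinus x y).comp_of_eq 0 (hasDerivAt_neg (0 : ℝ)).hasDerivWithinAt
    (fun t (ht : 0 < t) => show -t < 0 by linarith) neg_zero.symm
  rw [rhoPlus_eq_of_hasDerivWithinAt (L := -rhoMinus x y) (fun t => by simp)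
    (h.congr_deriv (by ring)), neg_neg]

lemma rhoPlus_smul_right (x y : X) {c : ℝ} (hc : 0 < c) :
    rhoPlus x (c • y) = c * rhoPlus x y := by
  have h := (hasDerivWithinAt_rhoPlus x y).comp_of_eq 0
    ((hasDerivAt_id (0 : ℝ)).const_mul c).hasDerivWithinAt
    (fun t (ht : 0 < t) => show 0 < c * t by positivity) (mul_zero c).symm
  exact rhoPlus_eq_of_hasDerivWithinAt (fun t => by simp [smul_smul, mul_comm])
    (h.congr_deriv (by simp; ring))

lemma rhoPlus_smul_smul (x y : X) (c : ℝ) :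
    rhoPlus (c • x) (c • y) = c ^ 2 * rhoPlus x y := by
  refine rhoPlus_eq_of_hasDerivWithinAt (fun t => ?_)
    (((hasDerivWithinAt_rhoPlus x y).const_mul (c ^ 2)).congr_deriv (by ring))
  rw [smul_comm, ← smul_add, norm_smul, mul_pow, Real.norm_eq_abs, sq_abs]

lemma rhoPlus_zero_left (y : X) : rhoPlus 0 y = 0 := by
  refine rhoPlus_eq_of_hasDerivWithinAt (g := fun t => t ^ 2 * ‖y‖ ^ 2) (fun t => ?_)
    ((((hasDerivAt_pow 2 (0 : ℝ)).mul_const _).hasDerivWithinAt).congr_deriv (by simp))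
  rw [zero_add, norm_smul, mul_pow, Real.norm_eq_abs, sq_abs]

lemma rhoPlus_smul_self (x : X) (s : ℝ) : rhoPlus x (s • x) = s * ‖x‖ ^ 2 := by
  refine rhoPlus_eq_of_hasDerivWithinAt (g := fun t => (1 + t * s) ^ 2 * ‖x‖ ^ 2) (fun t => ?_)
    (((((hasDerivAt_id (0 : ℝ)).mul_const s).const_add 1).pow 2).mul_const _
      |>.hasDerivWithinAt.congr_deriv (by simp; ring))
  rw [smul_smul, show x + (t * s) • x = (1 + t * s) • x by module, norm_smul, mul_pow,
    Real.norm_eq_abs, sq_abs]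

lemma rhoPlus_zero_right (x : X) : rhoPlus x 0 = 0 := by
  simpa using rhoPlus_smul_self x 0

lemma rhoMinus_smul_right (x y : X) {c : ℝ} (hc : 0 < c) :
    rhoMinus x (c • y) = c * rhoMinus x y := by
  rw [rhoMinus_eq_neg_rhoPlus_neg, rhoMinus_eq_neg_rhoPlus_neg, ← smul_neg,
    rhoPlus_smul_right _ _ hc, mul_neg]

lemma rhoMinus_smul_smul (x y : X) (c : ℝ) :
    rhoMinus (c • x) (c • y) = c ^ 2 * rhoMinus x y := by
  rw [rhoMinus_eq_neg_rhoPlus_neg, rhoMinus_eq_neg_rhoPlus_neg, ← smul_neg, rhoPlus_smul_smul,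
    mul_neg]

lemma rhoStar_neg_right (x y : X) : rhoStar x (-y) = rhoStar x y := by
  simp only [rhoStar, rhoMinus_eq_neg_rhoPlus_neg, neg_neg]
  ring

lemma rhoStar_smul_right (x y : X) (c : ℝ) : rhoStar x (c • y) = c ^ 2 * rhoStar x y := by
  have hpos : ∀ c : ℝ, 0 < c → ∀ y : X, rhoStar x (c • y) = c ^ 2 * rhoStar x y := by
    intro c hc y
    rw [rhoStar, rhoStar, rhoPlus_smul_right _ _ hc, rhoMinus_smul_right _ _ hc]
    ring
  rcases lt_trichotomy c 0 with hc | rfl | hc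
  · rw [← neg_smul_neg, hpos _ (neg_pos.2 hc), rhoStar_neg_right, neg_sq]
  · simp [rhoStar, rhoPlus_zero_right]
  · exact hpos c hc y

lemma rhoStar_smul_left (x y : X) (c : ℝ) : rhoStar (c • x) y = c ^ 2 * rhoStar x y := by
  rcases eq_or_ne c 0 with rfl | hc
  · simp [rhoStar, rhoPlus_zero_left]
  calc rhoStar (c • x) y = rhoStar (c • x) (c • c⁻¹ • y) := by rw [smul_inv_smul₀ hc]
    _ = c ^ 2 * c ^ 2 * rhoStar x (c⁻¹ • y) := by
      rw [rhoStar, rhoStar, rhoPlus_smul_smul, rhoMinus_smul_smul]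
      ring
    _ = c ^ 2 * rhoStar x y := by
      rw [rhoStar_smul_right]
      field_simp

lemma norm_inv_two_smul_add_sq_le (a b : X) :
    ‖(2 : ℝ)⁻¹ • (a + b)‖ ^ 2 ≤ (‖a‖ ^ 2 + ‖b‖ ^ 2) / 2 := by
  rw [norm_smul, Real.norm_of_nonneg (by norm_num)]
  nlinarith [norm_add_le a b, norm_nonneg (a + b), sq_nonneg (‖a‖ - ‖b‖)]

lemma rhoPlus_add_le (x y z : X) : rhoPlus x (y + z) ≤ rhoPlus x y + rhoPlus x z := by
  have hslope (v : X) : Tendsto (slope (fun t : ℝ => ‖x + t • v‖ ^ 2) 0) (𝓝[>] 0)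
      (𝓝 (2 * rhoPlus x v)) :=
    (hasDerivWithinAt_iff_tendsto_slope' self_notMem_Ioi).1 (hasDerivWithinAt_rhoPlus x v)
  have key : 2 * rhoPlus x (y + z) ≤
      (2 * rhoPlus x ((2 : ℝ) • y) + 2 * rhoPlus x ((2 : ℝ) • z)) / 2 := by
    refine le_of_tendsto_of_tendsto (hslope _) (((hslope _).add (hslope _)).div_const 2) ?_
    filter_upwards [self_mem_nhdsWithin] with t (ht : 0 < t)
    have hmid := norm_inv_two_smul_add_sq_le (x + t • (2 : ℝ) • y) (x + t • (2 : ℝ) • z)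
    rw [show (2 : ℝ)⁻¹ • (x + t • (2 : ℝ) • y + (x + t • (2 : ℝ) • z)) = x + t • (y + z) by
      module] at hmid
    simp only [slope_def_field, zero_smul, add_zero, sub_zero]
    rw [← add_div, div_div, div_le_div_iff₀ ht (by positivity)]
    nlinarith
  rw [rhoPlus_smul_right _ _ two_pos, rhoPlus_smul_right _ _ two_pos] at key
  linarith

lemma rhoMinus_add_ge (x y z : X) : rhoMinus x y + rhoMinus x z ≤ rhoMinus x (y + z) := by
  simp only [rhoMinus_eq_neg_rhoPlus_neg, neg_add]
  linarith [rhoPlus_add_le x (-y) (-z)]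

lemma rhoPlus_add_smul_self (x y : X) (s : ℝ) :
    rhoPlus x (y + s • x) = rhoPlus x y + s * ‖x‖ ^ 2 := by
  have h₁ := rhoPlus_add_le x y (s • x)
  have h₂ := rhoPlus_add_le x (y + s • x) ((-s) • x)
  rw [show y + s • x + (-s) • x = y by module, rhoPlus_smul_self] at h₂
  rw [rhoPlus_smul_self] at h₁
  linarith

lemma rhoMinus_add_smul_self (x y : X) (s : ℝ) :
    rhoMinus x (y + s • x) = rhoMinus x y + s * ‖x‖ ^ 2 := by
  rw [rhoMinus_eq_neg_rhoPlus_neg, rhoMinus_eq_neg_rhoPlus_neg, neg_add, ← neg_smul,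
    rhoPlus_add_smul_self]
  ring

lemma rhoPlus_sub_div_smul_self (x y : X) (hx : x ≠ 0) :
    rhoPlus x (y - (rhoPlus x y / ‖x‖ ^ 2) • x) = 0 := by
  rw [sub_eq_add_neg, ← neg_smul, rhoPlus_add_smul_self]
  field_simp
  ring

lemma rhoMinus_sub_div_smul_self (x y : X) (hx : x ≠ 0) :
    rhoMinus x (y - (rhoMinus x y / ‖x‖ ^ 2) • x) = 0 := by
  rw [sub_eq_add_neg, ← neg_smul, rhoMinus_add_smul_self]
  field_simp
  ring

lemma rhoMinus_add_pos {x w : X} (h : ‖x‖ < ‖x + w‖) : 0 < rhoMinus (x + w) w := by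
  have := le_rhoMinus (x + w) w
  rw [add_sub_cancel_right] at this
  nlinarith [norm_nonneg x]

def IsSmoothPoint (x : X) : Prop := ∀ y, rhoMinus x y = rhoPlus x y

lemma IsSmoothPoint.isLinearMap_rhoPlus {x : X} (hx : IsSmoothPoint x) :
    IsLinearMap ℝ (rhoPlus x) where
  map_add y z := by
    refine le_antisymm (rhoPlus_add_le x y z) ?_
    simpa only [hx y, hx z, hx (y + z)] using rhoMinus_add_ge x y z
  map_smul c y := by
    rcases lt_trichotomy c 0 with hc | rfl | hc
    · rw [← neg_smul_neg, rhoPlus_smul_right _ _ (neg_pos.2 hc), ← hx y,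
        rhoMinus_eq_neg_rhoPlus_neg, smul_eq_mul]
      ring
    · simp [rhoPlus_zero_right]
    · exact rhoPlus_smul_right x y hc

lemma exists_rhoMinus_eq_rhoPlus_eq {x v : X} (hx : x ≠ 0) (hv : rhoMinus x v < rhoPlus x v)
    {a b : ℝ} (hab : a < b) : ∃ u, rhoMinus x u = a ∧ rhoPlus x u = b := by
  set s := (b - a) / (rhoPlus x v - rhoMinus x v)
  have hs : 0 < s := div_pos (by linarith) (by linarith)
  have hsv : s * (rhoPlus x v - rhoMinus x v) = b - a := div_mul_cancel₀ _ (by linarith)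
  refine ⟨s • v + ((a - s * rhoMinus x v) / ‖x‖ ^ 2) • x, ?_, ?_⟩
  · rw [rhoMinus_add_smul_self, rhoMinus_smul_right _ _ hs]
    field_simp
    ring
  · rw [rhoPlus_add_smul_self, rhoPlus_smul_right _ _ hs]
    field_simp
    linear_combination hsv

lemma exists_rhoPlus_eq_zero_lt_norm (hdim : 2 ≤ Module.rank ℝ X) {x : X} (hx : x ≠ 0) (R : ℝ) :
    ∃ w, rhoPlus x w = 0 ∧ R < ‖w‖ := by
  obtain ⟨y, hy⟩ : ∃ y : X, ∀ r : ℝ, r • x ≠ y := by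
    by_contra! h
    have := hdim.trans (rank_le_one_iff.2 ⟨x, h⟩)
    norm_num at this
  set w := y - (rhoPlus x y / ‖x‖ ^ 2) • x
  have hw : w ≠ 0 := sub_ne_zero.2 (hy _).symm
  have hc : 0 < (|R| + 1) / ‖w‖ := by positivity
  refine ⟨((|R| + 1) / ‖w‖) • w, ?_, ?_⟩
  · rw [rhoPlus_smul_right _ _ hc, rhoPlus_sub_div_smul_self x y hx, mul_zero]
  · rw [norm_smul, Real.norm_of_nonneg hc.le, div_mul_cancel₀ _ (norm_ne_zero_iff.2 hw)]
    linarith [le_abs_self R]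

end NormDerivative

def cauchyDiff {X G : Type*} [Add X] [AddCommGroup G] (f : X → G) (x y : X) : G :=
  f (x + y) - f x - f y

section CauchyDiff

variable {X G : Type*} [AddCommGroup X] [AddCommGroup G] {f : X → G}

lemma cauchyDiff_comm (f : X → G) (x y : X) : cauchyDiff f x y = cauchyDiff f y x := by
  simp only [cauchyDiff, add_comm x y]
  abel

lemma map_add_of_forall_add_eq_comp {φ χ ψ : ℝ → G} {p q : ℝ} (hq : q ≠ 0) (hφ : φ 0 = 0)
    (h : ∀ a b, ψ (a * p + b * q) = φ a + χ b) (r s : ℝ) : φ (r + s) = φ r + φ s := by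
  have hχ : χ (s * p / q) = φ s + χ 0 := by
    rw [← zero_add (χ _), ← hφ, ← h, ← h, zero_mul, zero_mul, zero_add, add_zero,
      div_mul_cancel₀ _ hq]
  calc φ (r + s) = ψ ((r + s) * p + 0 * q) - χ 0 := by rw [h, add_sub_cancel_right]
    _ = ψ (r * p + s * p / q * q) - χ 0 := by rw [div_mul_cancel₀ _ hq, zero_mul, add_zero, add_mul]
    _ = φ r + φ s := by rw [h, hχ]; abel

theorem exists_add_biadditive_of_cauchyDiff_add_right [Module ℝ X]
    (h : ∀ x y z, cauchyDiff f x (y + z) = cauchyDiff f x y + cauchyDiff f x z) :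
    ∃ (A : X → G) (B : X → X → G),
      (∀ x y, A (x + y) = A x + A y) ∧
      (∀ x y z, B (x + y) z = B x z + B y z) ∧
      (∀ x y z, B x (y + z) = B x y + B x z) ∧
      (∀ x y, B x y = B y x) ∧
      (∀ x, f x = A x + B x x) ∧
      (∀ x y, B x y = cauchyDiff f ((2 : ℝ)⁻¹ • x) y) := by
  have hleft (x y z : X) : cauchyDiff f (x + y) z = cauchyDiff f x z + cauchyDiff f y z := by
    rw [cauchyDiff_comm, h, cauchyDiff_comm f z, cauchyDiff_comm f z]
  have hhalf (x : X) : (2 : ℝ)⁻¹ • x + (2 : ℝ)⁻¹ • x = x := by module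
  set B : X → X → G := fun x y => cauchyDiff f ((2 : ℝ)⁻¹ • x) y
  have hBl (x y z : X) : B (x + y) z = B x z + B y z := by simp only [B, smul_add, hleft]
  have hBr (x y z : X) : B x (y + z) = B x y + B x z := h _ _ _
  have hBs (x y : X) : B x y = B y x :=
    calc B x y = cauchyDiff f ((2 : ℝ)⁻¹ • x) ((2 : ℝ)⁻¹ • y + (2 : ℝ)⁻¹ • y) := by
          rw [hhalf]
      _ = cauchyDiff f ((2 : ℝ)⁻¹ • y) ((2 : ℝ)⁻¹ • x + (2 : ℝ)⁻¹ • x) := by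
          rw [h, h, cauchyDiff_comm]
      _ = B y x := by rw [hhalf]
  have hD (x y : X) : cauchyDiff f x y = B x y + B y x := by
    rw [hBs y x, ← hleft, hhalf]
  refine ⟨fun x => f x - B x x, B, fun x y => ?_, hBl, hBr, hBs,
    fun x => (sub_add_cancel _ _).symm, fun _ _ => rfl⟩
  have hf : f (x + y) = cauchyDiff f x y + f x + f y := by
    rw [cauchyDiff]
    abel
  show f (x + y) - B (x + y) (x + y) = (f x - B x x) + (f y - B y y)
  rw [hf, hD, hBl, hBr, hBr]
  abel

end CauchyDiff

section OrthogonallyAdditive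

variable {X G : Type*} [NormedAddCommGroup X] [NormedSpace ℝ X] [AddCommGroup G] {f : X → G}

def RhoStarOrthAdditive (f : X → G) : Prop := ∀ x y, rhoStar x y = 0 → f (x + y) = f x + f y

namespace RhoStarOrthAdditive

lemma map_zero (hf : RhoStarOrthAdditive f) : f 0 = 0 := by
  have h := hf 0 0 (by rw [rhoStar, rhoPlus_zero_left, mul_zero])
  rw [add_zero] at h
  exact left_eq_add.1 h

lemma cauchyDiff_zero_right (hf : RhoStarOrthAdditive f) (x : X) : cauchyDiff f x 0 = 0 := by
  simp [cauchyDiff, hf.map_zero]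

lemma cauchyDiff_eq_zero (hf : RhoStarOrthAdditive f) {x y : X} (h : rhoStar x y = 0) :
    cauchyDiff f x y = 0 := by
  rw [cauchyDiff, hf x y h]
  abel

lemma cauchyDiff_smul_add (hf : RhoStarOrthAdditive f) {x w : X} (h : rhoStar x w = 0) (r : ℝ) :
    cauchyDiff f x (r • x + w) = cauchyDiff f x (r • x) := by
  have hsplit (c : ℝ) : f (c • x + w) = f (c • x) + f w :=
    hf _ _ (by rw [rhoStar_smul_left, h, mul_zero])
  rw [cauchyDiff, cauchyDiff, show x + (r • x + w) = (1 + r) • x + w by module,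
    show x + r • x = (1 + r) • x by module, hsplit, hsplit]
  abel

lemma cauchyDiff_eq_rhoPlus (hf : RhoStarOrthAdditive f) {x : X} (hx : x ≠ 0) (y : X) :
    cauchyDiff f x y = cauchyDiff f x ((rhoPlus x y / ‖x‖ ^ 2) • x) := by
  have := hf.cauchyDiff_smul_add (by rw [rhoStar, rhoPlus_sub_div_smul_self x y hx, mul_zero])
    (rhoPlus x y / ‖x‖ ^ 2)
  rwa [add_sub_cancel] at this

lemma cauchyDiff_eq_rhoMinus (hf : RhoStarOrthAdditive f) {x : X} (hx : x ≠ 0) (y : X) :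
    cauchyDiff f x y = cauchyDiff f x ((rhoMinus x y / ‖x‖ ^ 2) • x) := by
  have := hf.cauchyDiff_smul_add (by rw [rhoStar, rhoMinus_sub_div_smul_self x y hx, zero_mul])
    (rhoMinus x y / ‖x‖ ^ 2)
  rwa [add_sub_cancel] at this

lemma cauchyDiff_eq_zero_of_not_isSmoothPoint (hf : RhoStarOrthAdditive f) {x : X} (hx : x ≠ 0)
    (hs : ¬IsSmoothPoint x) (y : X) : cauchyDiff f x y = 0 := by
  obtain ⟨v, hv⟩ : ∃ v, rhoMinus x v < rhoPlus x v := by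
    simp only [IsSmoothPoint, not_forall] at hs
    obtain ⟨v, hv⟩ := hs
    exact ⟨v, (rhoMinus_le_rhoPlus x v).lt_of_ne hv⟩
  have hN : 0 < ‖x‖ ^ 2 := by positivity
  have hconst (a b : ℝ) (hab : a < b) : cauchyDiff f x (a • x) = cauchyDiff f x (b • x) := by
    obtain ⟨u, hua, hub⟩ := exists_rhoMinus_eq_rhoPlus_eq hx hv (mul_lt_mul_of_pos_right hab hN)
    have e₁ := hf.cauchyDiff_eq_rhoMinus hx u
    have e₂ := hf.cauchyDiff_eq_rhoPlus hx u
    rw [hua, mul_div_cancel_right₀ _ hN.ne'] at e₁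
    rw [hub, mul_div_cancel_right₀ _ hN.ne'] at e₂
    exact e₁.symm.trans e₂
  have hzero (r : ℝ) : cauchyDiff f x (r • x) = 0 := by
    rcases lt_trichotomy r 0 with h | rfl | h
    · rw [hconst r 0 h, zero_smul, hf.cauchyDiff_zero_right]
    · rw [zero_smul, hf.cauchyDiff_zero_right]
    · rw [← hconst 0 r h, zero_smul, hf.cauchyDiff_zero_right]
  rw [hf.cauchyDiff_eq_rhoPlus hx, hzero]

lemma cauchyDiff_add_smul_add_smul (hf : RhoStarOrthAdditive f) {x w : X} (h : rhoStar x w = 0)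
    (a b : ℝ) :
    cauchyDiff f (x + w) (a • x + b • w) = cauchyDiff f x (a • x) + cauchyDiff f w (b • w) := by
  have hsplit (c d : ℝ) : f (c • x + d • w) = f (c • x) + f (d • w) :=
    hf _ _ (by rw [rhoStar_smul_left, rhoStar_smul_right, h]; ring)
  have hxw := hsplit 1 1
  rw [one_smul, one_smul] at hxw
  rw [cauchyDiff, cauchyDiff, cauchyDiff,
    show x + w + (a • x + b • w) = (1 + a) • x + (1 + b) • w by module, hsplit, hsplit, hxw,
    show x + a • x = (1 + a) • x by module, show w + b • w = (1 + b) • w by module]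
  abel

lemma cauchyDiff_smul_add_smul (hf : RhoStarOrthAdditive f) (hdim : 2 ≤ Module.rank ℝ X)
    {x : X} (hx : x ≠ 0) (r s : ℝ) :
    cauchyDiff f x ((r + s) • x) = cauchyDiff f x (r • x) + cauchyDiff f x (s • x) := by
  obtain ⟨w, hxw, hw⟩ := exists_rhoPlus_eq_zero_lt_norm hdim hx (2 * ‖x‖)
  have hplane := hf.cauchyDiff_add_smul_add_smul (by rw [rhoStar, hxw, mul_zero])
  have hxu : ‖x‖ < ‖x + w‖ := by
    have := norm_sub_le (x + w) x
    rw [add_sub_cancel_left] at this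
    linarith
  have hu : x + w ≠ 0 := by
    rintro h
    rw [h, norm_zero] at hxu
    linarith [norm_nonneg x]
  by_cases hsm : IsSmoothPoint (x + w)
  · have hlin := hsm.isLinearMap_rhoPlus
    refine map_add_of_forall_add_eq_comp (φ := fun a => cauchyDiff f x (a • x))
      (ψ := fun c => cauchyDiff f (x + w) (c • (x + w)))
      (χ := fun b => cauchyDiff f w (b • w)) (p := rhoPlus (x + w) x / ‖x + w‖ ^ 2)
      (q := rhoPlus (x + w) w / ‖x + w‖ ^ 2) ?_ (by simp [hf.cauchyDiff_zero_right]) ?_ r s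
    · have := (rhoMinus_add_pos hxu).trans_le (rhoMinus_le_rhoPlus _ _)
      positivity
    · intro a b
      rw [← hplane, hf.cauchyDiff_eq_rhoPlus hu (a • x + b • w), hlin.map_add, hlin.map_smul,
        hlin.map_smul, smul_eq_mul, smul_eq_mul, add_div, mul_div_assoc, mul_div_assoc]
  · have h0 (a : ℝ) : cauchyDiff f x (a • x) = 0 := by
      have := hplane a 0
      rwa [zero_smul, add_zero, hf.cauchyDiff_zero_right, add_zero,
        hf.cauchyDiff_eq_zero_of_not_isSmoothPoint hu hsm, eq_comm] at this
    rw [h0, h0, h0, add_zero]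

lemma cauchyDiff_add_right (hf : RhoStarOrthAdditive f) (hdim : 2 ≤ Module.rank ℝ X)
    (x y z : X) : cauchyDiff f x (y + z) = cauchyDiff f x y + cauchyDiff f x z := by
  rcases eq_or_ne x 0 with rfl | hx
  · simp [cauchyDiff, hf.map_zero]
  by_cases hsm : IsSmoothPoint x
  · rw [hf.cauchyDiff_eq_rhoPlus hx, hf.cauchyDiff_eq_rhoPlus hx y, hf.cauchyDiff_eq_rhoPlus hx z,
      hsm.isLinearMap_rhoPlus.map_add, add_div, hf.cauchyDiff_smul_add_smul hdim hx]
  · simp only [hf.cauchyDiff_eq_zero_of_not_isSmoothPoint hx hsm, add_zero]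

end RhoStarOrthAdditive

end OrthogonallyAdditive

theorem rhoStar_orthogonally_additive_iff {X : Type*} [NormedAddCommGroup X]
    [NormedSpace ℝ X] (hdim : 2 ≤ Module.rank ℝ X)
    {G : Type*} [AddCommGroup G] (f : X → G) :
    (∀ x y : X, rhoStar x y = 0 → f (x + y) = f x + f y) ↔
    ∃ (A : X → G) (B : X → X → G),
      (∀ x y : X, A (x + y) = A x + A y) ∧
      (∀ x y z : X, B (x + y) z = B x z + B y z) ∧
      (∀ x y z : X, B x (y + z) = B x y + B x z) ∧
      (∀ x y : X, B x y = B y x) ∧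
      (∀ x : X, f x = A x + B x x) ∧
      (∀ x y : X, rhoStar x y = 0 → B x y = 0) := by
  constructor
  · intro hf
    obtain ⟨A, B, hA, hBl, hBr, hBs, hfAB, hB⟩ := exists_add_biadditive_of_cauchyDiff_add_right
      (RhoStarOrthAdditive.cauchyDiff_add_right hf hdim)
    refine ⟨A, B, hA, hBl, hBr, hBs, hfAB, fun x y hxy => ?_⟩
    rw [hB, RhoStarOrthAdditive.cauchyDiff_eq_zero hf (by rw [rhoStar_smul_left, hxy, mul_zero])]
  · rintro ⟨A, B, hA, hBl, hBr, hBs, hfAB, hB⟩ x y hxy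
    rw [hfAB, hfAB x, hfAB y, hA, hBl, hBr, hBr, hBs y x, hB x y hxy]
    abel
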